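/- Let T > 0, let V : [0,T] → M₂(ℂ) be continuous, and let h : {(x,s) : 0 ≤ x ≤ s ≤ T} → M₂(ℂ) be continuous. Let D := { y ∈ C¹([0,T]; ℂ²) : y(T) = 0, y′(T) = 0, y₁(0) = 0 } and, for y ∈ D, define (L y)(x) := J y′(x) + V(x) y(x) + ∫_x^T h(x,s) y(s) ds. If ∫₀^T (L y)(x) · conj(z(x)) dx = ∫₀^T y(x) · conj((L z)(x)) dx for all y, z ∈ D, then V(x) is Hermitian (V(x)* = V(x)) for every x ∈ [0,T] and h(x,s) = 0 for all 0 ≤ x ≤ s ≤ T. -/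

import Mathlib

/-!
Test the symmetry relation on `y = φ e_j`, `z = ψ e_i` with real test functions `φ, ψ` supported
in `(0, T)`. After an integration by parts the `J d/dx` terms cancel, leaving
`∫ ((V + K)(φ e_j))_i ψ = conj ∫ ((V + K)(ψ e_i))_j φ`, where `K` is the integral operator with
kernel `h`. If `supp ψ` lies to the left of `supp φ`, the right side vanishes because `K` is upper
triangular, while the left side is `∫∫ ψ(x) h_ij(x,s) φ(s)`; localising in `ψ` and then in `φ` gives
`h = 0` on the open triangle. The identity then reduces to `∫ (V_ij - conj V_ji) φ ψ = 0`, so `V` is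
Hermitian. Since `L` only sees `V` on `[0, T]` and `h` on the closed triangle, both may first be
extended continuously to the whole line and plane; the boundary follows by continuity.
-/

open MeasureTheory Set Matrix

noncomputable section

/-- The matrix `J = [[0,1],[-1,0]]`. -/
def Jmat : Matrix (Fin 2) (Fin 2) ℂ := !![0, 1; -1, 0]

/-- The domain `{(x,s) : 0 ≤ x ≤ s ≤ T}`. -/
def DeltaT (T : ℝ) : Set (ℝ × ℝ) := {z | 0 ≤ z.1 ∧ z.1 ≤ z.2 ∧ z.2 ≤ T}

/-- The operator `(L y)(x) = J y'(x) + V(x) y(x) + ∫_x^T h(x,s) y(s) ds`. -/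
def Lop18 (T : ℝ) (V : ℝ → Matrix (Fin 2) (Fin 2) ℂ)
    (h : ℝ → ℝ → Matrix (Fin 2) (Fin 2) ℂ) (y : ℝ → Fin 2 → ℂ) (x : ℝ) : Fin 2 → ℂ :=
  Jmat.mulVec (derivWithin y (Icc (0 : ℝ) T) x) + (V x).mulVec (y x)
    + ∫ s in x..T, (h x s).mulVec (y s)

/-- Membership in the domain `D` of `L`. -/
def memD (T : ℝ) (y : ℝ → Fin 2 → ℂ) : Prop :=
  ContDiffOn ℝ 1 y (Icc 0 T) ∧ y T = 0 ∧ derivWithin y (Icc (0 : ℝ) T) T = 0 ∧ y 0 0 = 0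

open scoped ComplexConjugate ContDiff

namespace DiracOperator

section General

theorem exists_continuous_eqOn_of_retraction {X Y : Type*} [TopologicalSpace X]
    [TopologicalSpace Y] {s : Set X} {r : X → X} (hr : Continuous r) (hrs : ∀ x, r x ∈ s)
    (hr_id : ∀ x ∈ s, r x = x) {f : X → Y} (hf : ContinuousOn f s) :
    ∃ g : X → Y, Continuous g ∧ EqOn g f s :=
  ⟨f ∘ r, hf.comp_continuous hr hrs, fun x hx => congrArg f (hr_id x hx)⟩

theorem intervalIntegral_apply {ι E : Type*} [Fintype ι] [NormedAddCommGroup E]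
    [NormedSpace ℝ E] [CompleteSpace E] {f : ℝ → ι → E} {a b : ℝ}
    (hf : IntervalIntegrable f volume a b) (i : ι) :
    (∫ s in a..b, f s) i = ∫ s in a..b, f s i :=
  ((ContinuousLinearMap.proj (R := ℝ) (φ := fun _ : ι => E) i).intervalIntegral_comp_comm hf).symm

theorem intervalIntegral_mul_ofReal_eq_integral {g : ℝ → ℂ} {φ : ℝ → ℝ} {a b : ℝ}
    (hφ : tsupport φ ⊆ Ioc a b) : ∫ x in a..b, g x * φ x = ∫ x, g x * φ x := by
  refine intervalIntegral.integral_eq_integral_of_support_subset fun x hx => hφ ?_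
  refine subset_tsupport _ fun hφx => hx ?_
  simp [hφx]

theorem eqOn_zero_of_integral_mul_eq_zero {g : ℝ → ℂ} {U : Set ℝ} (hU : IsOpen U)
    (hg : ContinuousOn g U)
    (H : ∀ φ : ℝ → ℝ, ContDiff ℝ ∞ φ → HasCompactSupport φ → tsupport φ ⊆ U →
      ∫ x, g x * φ x = 0) :
    EqOn g 0 U := by
  have hae : ∀ᵐ x, x ∈ U → g x = 0 :=
    hU.ae_eq_zero_of_integral_contDiff_smul_eq_zero (hg.locallyIntegrableOn hU.measurableSet)
      fun φ hφ hφc hφU => by simpa [Complex.real_smul, mul_comm] using H φ hφ hφc hφU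
  refine Measure.eqOn_open_of_ae_eq (μ := volume) ?_ hU hg continuousOn_const
  filter_upwards [ae_restrict_mem hU.measurableSet, ae_restrict_of_ae hae] with x hxU hx
  exact hx hxU

theorem integral_deriv_mul_eq_neg {u v : ℝ → ℝ} {a b : ℝ} (hu : ContDiff ℝ 1 u)
    (hv : ContDiff ℝ 1 v) (hua : u a = 0) (hub : u b = 0) :
    ∫ x in a..b, deriv u x * v x = -∫ x in a..b, u x * deriv v x := by
  rw [intervalIntegral.integral_mul_deriv_eq_deriv_mul
    (fun x _ => (hu.differentiable one_ne_zero x).hasDerivAt)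
    (fun x _ => (hv.differentiable one_ne_zero x).hasDerivAt)
    ((hu.continuous_deriv le_rfl).intervalIntegrable a b)
    ((hv.continuous_deriv le_rfl).intervalIntegrable a b), hua, hub]
  ring

theorem intervalIntegral_sum_mul_conj {n : ℕ} (y z : ℝ → Fin n → ℂ) (a b : ℝ) :
    ∫ x in a..b, ∑ k, y x k * conj (z x k) = conj (∫ x in a..b, ∑ k, z x k * conj (y x k)) := by
  rw [← intervalIntegral.intervalIntegral_conj]
  simp [map_sum, mul_comm]

end General

theorem conj_Jmat_apply (i j : Fin 2) : conj (Jmat i j) = Jmat i j := by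
  fin_cases i <;> fin_cases j <;> simp [Jmat]

theorem Jmat_apply_swap (i j : Fin 2) : Jmat j i = -Jmat i j := by
  fin_cases i <;> fin_cases j <;> simp [Jmat]

theorem Lop18_congr {T : ℝ} {V V' : ℝ → Matrix (Fin 2) (Fin 2) ℂ}
    {h h' : ℝ → ℝ → Matrix (Fin 2) (Fin 2) ℂ} (hV : EqOn V V' (Icc 0 T))
    (hh : EqOn (Function.uncurry h) (Function.uncurry h') (DeltaT T)) (y : ℝ → Fin 2 → ℂ)
    {x : ℝ} (hx : x ∈ Icc 0 T) : Lop18 T V h y x = Lop18 T V' h' y x := by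
  have hK : ∫ s in x..T, (h x s).mulVec (y s) = ∫ s in x..T, (h' x s).mulVec (y s) := by
    refine intervalIntegral.integral_congr fun s hs => ?_
    rw [uIcc_of_le hx.2] at hs
    rw [show h x s = h' x s from hh (x := (x, s)) ⟨hx.1, hs.1, hs.2⟩]
  simp only [Lop18, hV hx, hK]

def IsSymmetricOnD (T : ℝ) (V : ℝ → Matrix (Fin 2) (Fin 2) ℂ)
    (h : ℝ → ℝ → Matrix (Fin 2) (Fin 2) ℂ) : Prop :=
  ∀ y z : ℝ → Fin 2 → ℂ, memD T y → memD T z →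
    (∫ x in (0 : ℝ)..T, ∑ i, Lop18 T V h y x i * conj (z x i))
      = ∫ x in (0 : ℝ)..T, ∑ i, y x i * conj (Lop18 T V h z x i)

theorem IsSymmetricOnD.congr {T : ℝ} {V V' : ℝ → Matrix (Fin 2) (Fin 2) ℂ}
    {h h' : ℝ → ℝ → Matrix (Fin 2) (Fin 2) ℂ} (hsym : IsSymmetricOnD T V h) (hT : 0 ≤ T)
    (hV : EqOn V V' (Icc 0 T))
    (hh : EqOn (Function.uncurry h) (Function.uncurry h') (DeltaT T)) :
    IsSymmetricOnD T V' h' := by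
  intro y z hy hz
  have hL : ∀ w, ∀ x ∈ uIcc 0 T, Lop18 T V h w x = Lop18 T V' h' w x := fun w x hx =>
    Lop18_congr hV hh w (uIcc_of_le hT ▸ hx)
  convert hsym y z hy hz using 1 <;> refine intervalIntegral.integral_congr fun x hx => ?_ <;>
    simp only [hL _ x hx]

def testVec (φ : ℝ → ℝ) (j : Fin 2) (x : ℝ) : Fin 2 → ℂ := Pi.single j (φ x : ℂ)

theorem hasDerivAt_testVec {φ : ℝ → ℝ} {φ' x : ℝ} (hφ : HasDerivAt φ φ' x) (j : Fin 2) :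
    HasDerivAt (testVec φ j) (Pi.single j (φ' : ℂ)) x :=
  (ContinuousLinearMap.single ℝ (fun _ : Fin 2 => ℂ) j).hasFDerivAt.comp_hasDerivAt x
    hφ.ofReal_comp

theorem contDiff_testVec {φ : ℝ → ℝ} {n : WithTop ℕ∞} (hφ : ContDiff ℝ n φ) (j : Fin 2) :
    ContDiff ℝ n (testVec φ j) :=
  (ContinuousLinearMap.single ℝ (fun _ : Fin 2 => ℂ) j).contDiff.comp
    (Complex.ofRealCLM.contDiff.comp hφ)

theorem derivWithin_testVec {T : ℝ} (hT : 0 < T) {φ : ℝ → ℝ} (hφ : Differentiable ℝ φ)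
    (j : Fin 2) {x : ℝ} (hx : x ∈ Icc 0 T) :
    derivWithin (testVec φ j) (Icc 0 T) x = Pi.single j ((deriv φ x : ℝ) : ℂ) :=
  (hasDerivAt_testVec (hφ x).hasDerivAt j).hasDerivWithinAt.derivWithin
    (uniqueDiffOn_Icc hT x hx)

theorem memD_testVec {T : ℝ} (hT : 0 < T) {φ : ℝ → ℝ} (hφ : ContDiff ℝ 1 φ)
    (hsupp : tsupport φ ⊆ Ioo 0 T) (j : Fin 2) : memD T (testVec φ j) := by
  have hφ0 : φ 0 = 0 := image_eq_zero_of_notMem_tsupport fun hmem => (hsupp hmem).1.false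
  have hφT : φ T = 0 := image_eq_zero_of_notMem_tsupport fun hmem => (hsupp hmem).2.false
  have hφ'T : deriv φ T = 0 := by
    by_contra hne
    exact (hsupp (support_deriv_subset hne)).2.false
  refine ⟨(contDiff_testVec hφ j).contDiffOn, by simp [testVec, hφT], ?_, by simp [testVec, hφ0]⟩
  rw [derivWithin_testVec hT (hφ.differentiable one_ne_zero) j ⟨hT.le, le_rfl⟩, hφ'T,
    Complex.ofReal_zero, Pi.single_zero]

section Continuous

variable {T : ℝ} {V : ℝ → Matrix (Fin 2) (Fin 2) ℂ} {h : ℝ → ℝ → Matrix (Fin 2) (Fin 2) ℂ}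

theorem continuous_intervalIntegral_kernel (hh : Continuous (Function.uncurry h)) (i j : Fin 2)
    {χ : ℝ → ℝ} (hχ : Continuous χ) : Continuous fun x => ∫ s in x..T, h x s i j * χ s := by
  have hsymm : (fun x => ∫ s in x..T, h x s i j * χ s) = fun x => -∫ s in T..x, h x s i j * χ s :=
    funext fun x => intervalIntegral.integral_symm T x
  rw [hsymm]
  exact (intervalIntegral.continuous_parametric_intervalIntegral_of_continuous
    (f := fun x s => h x s i j * χ s)
    ((hh.matrix_elem i j).mul (Complex.continuous_ofReal.comp (hχ.comp continuous_snd)))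
    continuous_id).neg

theorem Lop18_testVec_apply (hT : 0 < T) (hh : Continuous (Function.uncurry h)) {φ : ℝ → ℝ}
    (hφ : ContDiff ℝ 1 φ) (i j : Fin 2) {x : ℝ} (hx : x ∈ Icc 0 T) :
    Lop18 T V h (testVec φ j) x i
      = Jmat i j * deriv φ x + (V x i j * φ x + ∫ s in x..T, h x s i j * φ s) := by
  have hmul : ∀ (A : Matrix (Fin 2) (Fin 2) ℂ) (c : ℂ),
      A *ᵥ Pi.single j c = fun k => A k j * c := fun A c => by
    ext k
    simp [Matrix.mulVec_single]
  have hint : IntervalIntegrable (fun s => h x s *ᵥ testVec φ j s) volume x T := by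
    simp_rw [testVec, hmul]
    exact (continuous_pi fun k => ((hh.comp (Continuous.prodMk_right x)).matrix_elem k j).mul
      (Complex.continuous_ofReal.comp hφ.continuous)).intervalIntegrable _ _
  simp only [Lop18, Pi.add_apply, intervalIntegral_apply hint,
    derivWithin_testVec hT (hφ.differentiable one_ne_zero) j hx]
  simp only [testVec, hmul]
  ring

/-- `∫₀ᵀ ((V + K)(φ e_j))_i ψ`, where `K` is the integral operator with kernel `h`: the part of
`⟪L (φ e_j), ψ e_i⟫` not involving `J d/dx`. -/
def lowerOrderPairing (T : ℝ) (V : ℝ → Matrix (Fin 2) (Fin 2) ℂ)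
    (h : ℝ → ℝ → Matrix (Fin 2) (Fin 2) ℂ) (i j : Fin 2) (φ ψ : ℝ → ℝ) : ℂ :=
  ∫ x in (0 : ℝ)..T, (V x i j * φ x + ∫ s in x..T, h x s i j * φ s) * ψ x

theorem integral_Lop18_testVec_mul_conj (hT : 0 < T) (hV : Continuous V)
    (hh : Continuous (Function.uncurry h)) {φ ψ : ℝ → ℝ} (hφ : ContDiff ℝ 1 φ)
    (hψ : Continuous ψ) (i j : Fin 2) :
    ∫ x in (0 : ℝ)..T, ∑ k, Lop18 T V h (testVec φ j) x k * conj (testVec ψ i x k)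
      = Jmat i j * ((∫ x in (0 : ℝ)..T, deriv φ x * ψ x : ℝ) : ℂ)
        + lowerOrderPairing T V h i j φ ψ := by
  have hpt : ∀ x ∈ uIcc 0 T,
      ∑ k, Lop18 T V h (testVec φ j) x k * conj (testVec ψ i x k)
        = Jmat i j * ((deriv φ x * ψ x : ℝ) : ℂ)
          + (V x i j * φ x + ∫ s in x..T, h x s i j * φ s) * ψ x := by
    intro x hx
    simp only [testVec, Pi.single_apply, apply_ite, map_zero, mul_zero,
      Finset.sum_ite_eq', Finset.mem_univ, if_true, Complex.conj_ofReal]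
    rw [Lop18_testVec_apply hT hh hφ i j (uIcc_of_le hT.le ▸ hx)]
    push_cast
    ring
  have hJ : IntervalIntegrable (fun x => Jmat i j * ((deriv φ x * ψ x : ℝ) : ℂ)) volume 0 T :=
    (continuous_const.mul (Complex.continuous_ofReal.comp
      ((hφ.continuous_deriv le_rfl).mul hψ))).intervalIntegrable _ _
  have hK : IntervalIntegrable
      (fun x => (V x i j * φ x + ∫ s in x..T, h x s i j * φ s) * ψ x) volume 0 T :=
    ((((hV.matrix_elem i j).mul (Complex.continuous_ofReal.comp hφ.continuous)).add
      (continuous_intervalIntegral_kernel hh i j hφ.continuous)).mul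
      (Complex.continuous_ofReal.comp hψ)).intervalIntegrable _ _
  rw [intervalIntegral.integral_congr hpt, intervalIntegral.integral_add hJ hK,
    intervalIntegral.integral_const_mul, intervalIntegral.integral_ofReal, lowerOrderPairing]

theorem IsSymmetricOnD.lowerOrderPairing_eq_conj (hsym : IsSymmetricOnD T V h) (hT : 0 < T)
    (hV : Continuous V) (hh : Continuous (Function.uncurry h)) {φ ψ : ℝ → ℝ}
    (hφ : ContDiff ℝ 1 φ) (hφT : tsupport φ ⊆ Ioo 0 T) (hψ : ContDiff ℝ 1 ψ)
    (hψT : tsupport ψ ⊆ Ioo 0 T) (i j : Fin 2) :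
    lowerOrderPairing T V h i j φ ψ = conj (lowerOrderPairing T V h j i ψ φ) := by
  have H := hsym _ _ (memD_testVec hT hφ hφT j) (memD_testVec hT hψ hψT i)
  rw [intervalIntegral_sum_mul_conj (testVec φ j), integral_Lop18_testVec_mul_conj hT hV hh hφ
    hψ.continuous, integral_Lop18_testVec_mul_conj hT hV hh hψ hφ.continuous] at H
  have hibp : ∫ x in (0 : ℝ)..T, deriv ψ x * φ x = -∫ x in (0 : ℝ)..T, deriv φ x * ψ x := by
    rw [integral_deriv_mul_eq_neg hψ hφ
      (image_eq_zero_of_notMem_tsupport fun hmem => (hψT hmem).1.false)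
      (image_eq_zero_of_notMem_tsupport fun hmem => (hψT hmem).2.false)]
    simp_rw [mul_comm (ψ _)]
  rw [map_add, map_mul, conj_Jmat_apply, Jmat_apply_swap, Complex.conj_ofReal, hibp] at H
  push_cast at H
  linear_combination H

theorem lowerOrderPairing_eq_zero_of_separated (hT : 0 ≤ T) {b : ℝ} {φ ψ : ℝ → ℝ}
    (hφ : ∀ x, b ≤ x → φ x = 0) (hψ : ∀ x ≤ b, ψ x = 0) (i j : Fin 2) :
    lowerOrderPairing T V h i j φ ψ = 0 := by
  have hzero : ∀ x ∈ uIcc 0 T,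
      (V x i j * φ x + ∫ s in x..T, h x s i j * φ s) * ψ x = 0 := by
    intro x hx
    rcases le_or_gt x b with hxb | hbx
    · simp [hψ x hxb]
    · have hK : ∫ s in x..T, h x s i j * φ s = 0 := by
        refine (intervalIntegral.integral_congr (g := fun _ => 0) fun s hs => ?_).trans
          intervalIntegral.integral_zero
        rw [uIcc_of_le (uIcc_of_le hT ▸ hx).2] at hs
        simp [hφ s (hbx.le.trans hs.1)]
      simp [hφ x hbx.le, hK]
  rw [lowerOrderPairing, intervalIntegral.integral_congr (g := fun _ => 0) hzero,
    intervalIntegral.integral_zero]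

theorem lowerOrderPairing_eq_of_separated (hh : Continuous (Function.uncurry h)) {b : ℝ}
    {φ ψ : ℝ → ℝ} (hφc : Continuous φ) (hφ : ∀ x ≤ b, φ x = 0) (hψ : ∀ x, b ≤ x → ψ x = 0)
    (i j : Fin 2) :
    lowerOrderPairing T V h i j φ ψ = ∫ x in (0 : ℝ)..T, (∫ s in b..T, h x s i j * φ s) * ψ x := by
  refine intervalIntegral.integral_congr fun x _ => ?_
  rcases le_or_gt b x with hbx | hxb
  · simp [hψ x hbx]
  have hint : ∀ c d, IntervalIntegrable (fun s => h x s i j * φ s) volume c d := fun c d =>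
    (((hh.comp (Continuous.prodMk_right x)).matrix_elem i j).mul
      (Complex.continuous_ofReal.comp hφc)).intervalIntegrable c d
  have hleft : ∫ s in x..b, h x s i j * φ s = 0 := by
    refine (intervalIntegral.integral_congr (g := fun _ => 0) fun s hs => ?_).trans
      intervalIntegral.integral_zero
    rw [uIcc_of_le hxb.le] at hs
    simp [hφ s hs.2]
  simp only [hφ x hxb.le, ← intervalIntegral.integral_add_adjacent_intervals (hint x b) (hint b T),
    hleft, Complex.ofReal_zero, mul_zero, zero_add]

theorem IsSymmetricOnD.kernel_eq_zero (hsym : IsSymmetricOnD T V h) (hT : 0 < T)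
    (hV : Continuous V) (hh : Continuous (Function.uncurry h)) {x₀ s₀ : ℝ} (hx₀ : 0 < x₀)
    (hxs : x₀ < s₀) (hs₀ : s₀ < T) : h x₀ s₀ = 0 := by
  ext i j
  obtain ⟨b, hxb, hbs⟩ := exists_between hxs
  have hG : ∀ φ : ℝ → ℝ, ContDiff ℝ ∞ φ → tsupport φ ⊆ Ioo b T →
      ∫ s in b..T, h x₀ s i j * φ s = 0 := by
    intro φ hφ hφb
    have hGc : Continuous fun x => ∫ s in b..T, h x s i j * φ s :=
      intervalIntegral.continuous_parametric_intervalIntegral_of_continuous'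
        (f := fun x s => h x s i j * φ s)
        ((hh.matrix_elem i j).mul (Complex.continuous_ofReal.comp (hφ.continuous.comp
          continuous_snd))) b T
    refine eqOn_zero_of_integral_mul_eq_zero isOpen_Ioo hGc.continuousOn
      (fun ψ hψ _ hψb => ?_) (⟨hx₀, hxb⟩ : x₀ ∈ Ioo 0 b)
    have hφ0 : ∀ x ≤ b, φ x = 0 := fun x hx =>
      image_eq_zero_of_notMem_tsupport fun hmem => (hφb hmem).1.not_ge hx
    have hψ0 : ∀ x, b ≤ x → ψ x = 0 := fun x hx =>
      image_eq_zero_of_notMem_tsupport fun hmem => (hψb hmem).2.not_ge hx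
    rw [← intervalIntegral_mul_ofReal_eq_integral (hψb.trans (Ioo_subset_Ioc_self.trans
        (Ioc_subset_Ioc_right (hbs.trans hs₀).le))),
      ← lowerOrderPairing_eq_of_separated hh hφ.continuous hφ0 hψ0,
      hsym.lowerOrderPairing_eq_conj hT hV hh (hφ.of_le (by simp))
        (hφb.trans (Ioo_subset_Ioo_left (hx₀.trans hxb).le)) (hψ.of_le (by simp))
        (hψb.trans (Ioo_subset_Ioo_right (hbs.trans hs₀).le)),
      lowerOrderPairing_eq_zero_of_separated hT.le hψ0 hφ0, map_zero]
  refine eqOn_zero_of_integral_mul_eq_zero isOpen_Ioo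
    ((hh.comp (Continuous.prodMk_right x₀)).matrix_elem i j).continuousOn
    (fun φ hφ _ hφb => ?_) (⟨hbs, hs₀⟩ : s₀ ∈ Ioo b T)
  rw [← intervalIntegral_mul_ofReal_eq_integral (hφb.trans Ioo_subset_Ioc_self)]
  exact hG φ hφ hφb

theorem lowerOrderPairing_of_kernel_eq_zero (hT : 0 ≤ T)
    (hker : EqOn (Function.uncurry h) 0 (DeltaT T)) (i j : Fin 2) (φ ψ : ℝ → ℝ) :
    lowerOrderPairing T V h i j φ ψ = ∫ x in (0 : ℝ)..T, V x i j * φ x * ψ x := by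
  refine intervalIntegral.integral_congr fun x hx => ?_
  rw [uIcc_of_le hT] at hx
  have hK : ∫ s in x..T, h x s i j * φ s = 0 := by
    refine (intervalIntegral.integral_congr (g := fun _ => 0) fun s hs => ?_).trans
      intervalIntegral.integral_zero
    rw [uIcc_of_le hx.2] at hs
    simp [show h x s = 0 from hker (x := (x, s)) ⟨hx.1, hs.1, hs.2⟩]
  simp only [hK, add_zero]

theorem IsSymmetricOnD.isHermitian_potential (hsym : IsSymmetricOnD T V h) (hT : 0 < T)
    (hV : Continuous V) (hh : Continuous (Function.uncurry h))
    (hker : EqOn (Function.uncurry h) 0 (DeltaT T)) {x₀ : ℝ} (hx₀ : x₀ ∈ Ioo 0 T) :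
    (V x₀).IsHermitian := by
  obtain ⟨δ, hδ, hball⟩ := Metric.nhds_basis_closedBall.mem_iff.1 (isOpen_Ioo.mem_nhds hx₀)
  let ψ : ContDiffBump x₀ := ⟨δ / 2, δ, half_pos hδ, half_lt_self hδ⟩
  have hψT : tsupport ψ ⊆ Ioo 0 T := ψ.tsupport_eq ▸ hball
  have hψ1 : ψ x₀ = 1 := ψ.one_of_mem_closedBall (Metric.mem_closedBall_self (half_pos hδ).le)
  ext i j
  have hcψ : Continuous fun x => (ψ x : ℂ) := Complex.continuous_ofReal.comp ψ.continuous
  have hW := eqOn_zero_of_integral_mul_eq_zero isOpen_Ioo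
    (g := fun x => (V x i j - conj (V x j i)) * ψ x)
    (((hV.matrix_elem i j).sub (Complex.continuous_conj.comp (hV.matrix_elem j i))).mul
      hcψ).continuousOn
    ?_ hx₀
  · rw [conjTranspose_apply]
    exact (sub_eq_zero.1 (by simpa [hψ1] using hW)).symm
  intro φ hφ _ hφT
  have hsymφψ := hsym.lowerOrderPairing_eq_conj hT hV hh (hφ.of_le (by simp)) hφT
    ψ.contDiff hψT i j
  rw [lowerOrderPairing_of_kernel_eq_zero hT.le hker,
    lowerOrderPairing_of_kernel_eq_zero hT.le hker,
    ← intervalIntegral.intervalIntegral_conj] at hsymφψ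
  have hcφ : Continuous fun x => (φ x : ℂ) := Complex.continuous_ofReal.comp hφ.continuous
  have hint₁ : IntervalIntegrable (fun x => V x i j * φ x * ψ x) volume 0 T :=
    (((hV.matrix_elem i j).mul hcφ).mul hcψ).intervalIntegrable _ _
  have hint₂ : IntervalIntegrable (fun x => conj (V x j i * ψ x * φ x)) volume 0 T :=
    (Complex.continuous_conj.comp (((hV.matrix_elem j i).mul hcψ).mul hcφ)).intervalIntegrable _ _
  rw [← intervalIntegral_mul_ofReal_eq_integral (hφT.trans Ioo_subset_Ioc_self)]
  calc ∫ x in (0 : ℝ)..T, (V x i j - conj (V x j i)) * ψ x * φ x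
      = (∫ x in (0 : ℝ)..T, V x i j * φ x * ψ x)
          - ∫ x in (0 : ℝ)..T, conj (V x j i * ψ x * φ x) := by
        rw [← intervalIntegral.integral_sub hint₁ hint₂]
        refine intervalIntegral.integral_congr fun x _ => ?_
        simp only [map_mul, Complex.conj_ofReal]
        ring
    _ = 0 := by rw [hsymφψ, sub_self]

end Continuous

def retractDeltaT (T : ℝ) (p : ℝ × ℝ) : ℝ × ℝ :=
  (max 0 (min p.1 (max 0 (min p.2 T))), max 0 (min p.2 T))

theorem continuous_retractDeltaT (T : ℝ) : Continuous (retractDeltaT T) := by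
  unfold retractDeltaT
  fun_prop

theorem retractDeltaT_mem {T : ℝ} (hT : 0 ≤ T) (p : ℝ × ℝ) : retractDeltaT T p ∈ DeltaT T :=
  ⟨le_max_left _ _, max_le (le_max_left _ _) (min_le_right _ _), max_le hT (min_le_right _ _)⟩

theorem retractDeltaT_of_mem {T : ℝ} {p : ℝ × ℝ} (hp : p ∈ DeltaT T) : retractDeltaT T p = p := by
  obtain ⟨h0, hxs, hsT⟩ := hp
  simp [retractDeltaT, min_eq_left hsT, max_eq_right (h0.trans hxs), min_eq_left hxs,
    max_eq_right h0]

theorem DeltaT_subset_closure {T : ℝ} (hT : 0 < T) :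
    DeltaT T ⊆ closure {p : ℝ × ℝ | 0 < p.1 ∧ p.1 < p.2 ∧ p.2 < T} := by
  intro p hp
  refine closure_mono ?_
    (segment_subset_closure_openSegment (left_mem_segment ℝ p (T / 3, 2 * T / 3)))
  rintro _ ⟨a, b, ha, hb, hab, rfl⟩
  obtain ⟨h0, hxs, hsT⟩ := hp
  simp only [mem_ofPred_eq, Prod.fst_add, Prod.snd_add, Prod.smul_fst, Prod.smul_snd, smul_eq_mul]
  refine ⟨by nlinarith, by nlinarith, by nlinarith⟩

end DiracOperator

open DiracOperator in
/-- Rigidity: symmetry of `L = J d/dx + V + ∫ h` on the domain `D`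
forces the potential `V` to be pointwise Hermitian and the triangular kernel `h`
to vanish identically. -/
theorem stmt18 (T : ℝ) (hT : 0 < T)
    (V : ℝ → Matrix (Fin 2) (Fin 2) ℂ)
    (hV : ∀ i j, ContinuousOn (fun x => V x i j) (Icc 0 T))
    (h : ℝ → ℝ → Matrix (Fin 2) (Fin 2) ℂ)
    (hh : ∀ i j, ContinuousOn (fun z : ℝ × ℝ => h z.1 z.2 i j) (DeltaT T))
    (hsym : ∀ y z : ℝ → Fin 2 → ℂ, memD T y → memD T z →
      (∫ x in (0 : ℝ)..T, ∑ i, Lop18 T V h y x i * (starRingEnd ℂ) (z x i))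
        = ∫ x in (0 : ℝ)..T, ∑ i, y x i * (starRingEnd ℂ) (Lop18 T V h z x i)) :
    (∀ x ∈ Icc (0 : ℝ) T, (V x)ᴴ = V x) ∧
    (∀ x s : ℝ, 0 ≤ x → x ≤ s → s ≤ T → h x s = 0) := by
  obtain ⟨V', hV', hV'V⟩ := exists_continuous_eqOn_of_retraction
    (continuous_subtype_val.comp continuous_projIcc) (fun x => (projIcc 0 T hT.le x).2)
    (fun x hx => congrArg Subtype.val (projIcc_of_mem hT.le hx))
    (continuousOn_pi.2 fun i => continuousOn_pi.2 (hV i))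
  obtain ⟨k, hk, hkh⟩ := exists_continuous_eqOn_of_retraction (continuous_retractDeltaT T)
    (retractDeltaT_mem hT.le) (fun _ => retractDeltaT_of_mem)
    (continuousOn_pi.2 fun i => continuousOn_pi.2 (hh i))
  have hsym' : IsSymmetricOnD T V' fun x s => k (x, s) :=
    IsSymmetricOnD.congr hsym hT.le hV'V.symm hkh.symm
  have hk0 : EqOn k 0 (DeltaT T) :=
    EqOn.of_subset_closure (fun p hp => hsym'.kernel_eq_zero hT hV' hk hp.1 hp.2.1 hp.2.2)
      hk.continuousOn continuousOn_const (fun p hp => ⟨hp.1.le, hp.2.1.le, hp.2.2.le⟩)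
      (DeltaT_subset_closure hT)
  have hV'herm : EqOn (fun x => (V' x)ᴴ) V' (Icc 0 T) :=
    EqOn.of_subset_closure (fun x hx => hsym'.isHermitian_potential hT hV' hk hk0 hx)
      hV'.matrix_conjTranspose.continuousOn hV'.continuousOn Ioo_subset_Icc_self
      (closure_Ioo hT.ne).ge
  refine ⟨fun x hx => ?_, fun x s h0 hxs hsT => ?_⟩
  · rw [← hV'V hx]
    exact hV'herm hx
  · have hxsΔ : (x, s) ∈ DeltaT T := ⟨h0, hxs, hsT⟩
    exact (hkh hxsΔ).symm.trans (hk0 hxsΔ)
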